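/- Let X and Y be nonempty sets and let μ, ν be finitely supported probability distributions on the disjoint union X + Y, with p := ∑_{x∈X} μ(x), q := ∑_{x∈X} ν(x), and conditional distributions μ_X, μ_Y, ν_X, ν_Y (i.e. μ(x) = p·μ_X(x), μ(y) = (1−p)·μ_Y(y), ν(x) = q·ν_X(x), ν(y) = (1−q)·ν_Y(y), arbitrary when the mass is 0). Then Re_∞(μ,ν) = max{ log(p/q) + Re_∞(μ_X,ν_X), log((1−p)/(1−q)) + Re_∞(μ_Y,ν_Y) }, with all arithmetic in the extended reals and the total value lying in [0,∞]. -/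

import Mathlib

/-
The ratio `μ(z)/ν(z)` on `X ⊕ Y` is `(p/q)·μ_X(x)/ν_X(x)` on the left summand and
`((1-p)/(1-q))·μ_Y(y)/ν_Y(y)` on the right one, so the supremum of the ratios over `X ⊕ Y` is
the maximum of the two scaled suprema. Since `log : [0,∞] → [-∞,∞]` is an order isomorphism
turning products into sums, taking logarithms gives the chain rule. The truncation to `[0,∞]`
in `renyiInf` does no harm because the supremum of `μ/ν` is at least `1` for probability
distributions: `1 = ∑ μ ≤ (sup μ/ν) · ∑ ν`.
-/

open scoped ENNReal

/- A finitely supported probability distribution on `X`. -/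
structure FinDist (X : Type*) where
  f : X → ℝ
  nonneg : ∀ x, 0 ≤ f x
  finite : (Function.support f).Finite
  sum_one : ∑ᶠ x, f x = 1

/- Truncation of an extended real to `[0,∞]`. -/
noncomputable def toENN (x : EReal) : ℝ≥0∞ :=
  if x = ⊤ then ⊤ else ENNReal.ofReal x.toReal

/- Rényi divergence of order `α` (`0 ≤ α < ∞`, `α ≠ 1`):
`(1/(α−1))·log(∑ₓ μ(x)^α / ν(x)^{α−1})`, computed in `[0,∞]`, where terms with
`μ(x) = 0` vanish, `a/0 = ∞` for `0 < a` (via `ENNReal` division and `rpow`),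
and `log ∞ = ∞`. -/
open Classical in
noncomputable def renyi {X : Type*} (α : ℝ) (μ ν : FinDist X) : ℝ≥0∞ :=
  toENN ((((α - 1)⁻¹ : ℝ) : EReal) *
    ENNReal.log (∑ᶠ x, if μ.f x = 0 then 0
      else ENNReal.ofReal (μ.f x) ^ α / ENNReal.ofReal (ν.f x) ^ (α - 1)))

/- Rényi divergence of order `∞`: `sup_x log (μ(x)/ν(x))`, with `a/0 = ∞` for
`a > 0`, `0/0 = 0` (both via `ENNReal` division) and `log ∞ = ∞`. -/
noncomputable def renyiInf {X : Type*} (μ ν : FinDist X) : ℝ≥0∞ :=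
  toENN (⨆ x, ENNReal.log (ENNReal.ofReal (μ.f x) / ENNReal.ofReal (ν.f x)))

open ENNReal

lemma coe_toENN_of_nonneg {e : EReal} (he : 0 ≤ e) : ((toENN e : ℝ≥0∞) : EReal) = e := by
  induction e using EReal.rec with
  | bot => exact absurd he (by simp)
  | coe x =>
      have hx : (0 : ℝ) ≤ x := by exact_mod_cast he
      simp [toENN, EReal.coe_ennreal_ofReal, max_eq_left hx]
  | top => simp [toENN]

lemma ENNReal.log_iSup {ι : Sort*} (f : ι → ℝ≥0∞) : log (⨆ i, f i) = ⨆ i, log (f i) :=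
  logOrderIso.map_iSup f

lemma ENNReal.ofReal_mul_div_ofReal_mul {a b c d : ℝ} (ha : 0 ≤ a) (hc : 0 ≤ c) :
    ENNReal.ofReal (a * b) / ENNReal.ofReal (c * d)
      = ENNReal.ofReal a / ENNReal.ofReal c * (ENNReal.ofReal b / ENNReal.ofReal d) := by
  rw [ENNReal.ofReal_mul ha, ENNReal.ofReal_mul hc,
    ENNReal.mul_div_mul_comm (Or.inr ofReal_ne_top) (Or.inl ofReal_ne_top)]

namespace FinDist

variable {X Y : Type*}

lemma tsum_ofReal (μ : FinDist X) : ∑' x, ENNReal.ofReal (μ.f x) = 1 := by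
  rw [← ENNReal.ofReal_tsum_of_nonneg μ.nonneg (summable_of_hasFiniteSupport μ.finite),
    tsum_eq_finsum μ.finite, μ.sum_one, ENNReal.ofReal_one]

lemma finsum_inl_add_finsum_inr (μ : FinDist (X ⊕ Y)) :
    ∑ᶠ x, μ.f (Sum.inl x) + ∑ᶠ y, μ.f (Sum.inr y) = 1 := by
  rw [← μ.sum_one, ← finsum_mem_univ μ.f, ← Set.range_inl_union_range_inr,
    finsum_mem_union' Set.isCompl_range_inl_range_inr.disjoint
      (μ.finite.inter_of_right _) (μ.finite.inter_of_right _),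
    finsum_mem_range Sum.inl_injective, finsum_mem_range Sum.inr_injective]

noncomputable def maxRatio (μ ν : FinDist X) : ℝ≥0∞ :=
  ⨆ x, ENNReal.ofReal (μ.f x) / ENNReal.ofReal (ν.f x)

lemma one_le_maxRatio (μ ν : FinDist X) : 1 ≤ maxRatio μ ν := by
  by_cases htop : maxRatio μ ν = ⊤
  · simp [htop]
  have hle : ∀ x, ENNReal.ofReal (μ.f x) ≤ maxRatio μ ν * ENNReal.ofReal (ν.f x) := fun x =>
    (ENNReal.div_le_iff_le_mul (Or.inr htop) (Or.inl ofReal_ne_top)).mp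
      (le_iSup (fun x => ENNReal.ofReal (μ.f x) / ENNReal.ofReal (ν.f x)) x)
  calc 1 = ∑' x, ENNReal.ofReal (μ.f x) := μ.tsum_ofReal.symm
    _ ≤ ∑' x, maxRatio μ ν * ENNReal.ofReal (ν.f x) := ENNReal.tsum_le_tsum hle
    _ = maxRatio μ ν := by rw [ENNReal.tsum_mul_left, ν.tsum_ofReal, mul_one]

lemma renyiInf_eq_toENN_log_maxRatio (μ ν : FinDist X) :
    renyiInf μ ν = toENN (log (maxRatio μ ν)) := by
  rw [renyiInf, maxRatio, log_iSup]

lemma coe_renyiInf (μ ν : FinDist X) : (renyiInf μ ν : EReal) = log (maxRatio μ ν) := by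
  rw [renyiInf_eq_toENN_log_maxRatio]
  exact coe_toENN_of_nonneg (zero_le_log_iff.mpr (one_le_maxRatio μ ν))

lemma maxRatio_sum {μ ν : FinDist (X ⊕ Y)} {μX νX : FinDist X} {μY νY : FinDist Y}
    {a b c d : ℝ} (ha : 0 ≤ a) (hb : 0 ≤ b) (hc : 0 ≤ c) (hd : 0 ≤ d)
    (hμX : ∀ x, μ.f (Sum.inl x) = a * μX.f x) (hμY : ∀ y, μ.f (Sum.inr y) = c * μY.f y)
    (hνX : ∀ x, ν.f (Sum.inl x) = b * νX.f x) (hνY : ∀ y, ν.f (Sum.inr y) = d * νY.f y) :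
    maxRatio μ ν = max (ENNReal.ofReal a / ENNReal.ofReal b * maxRatio μX νX)
      (ENNReal.ofReal c / ENNReal.ofReal d * maxRatio μY νY) := by
  simp only [maxRatio, iSup_sum, hμX, hμY, hνX, hνY, ofReal_mul_div_ofReal_mul ha hb,
    ofReal_mul_div_ofReal_mul hc hd]
  rw [ENNReal.mul_iSup, ENNReal.mul_iSup]

end FinDist

theorem renyiInf_chain_rule_sum_general {X Y : Type*}
    (μ ν : FinDist (X ⊕ Y)) (μX νX : FinDist X) (μY νY : FinDist Y) (p q : ℝ)
    (hp : p = ∑ᶠ x, μ.f (Sum.inl x))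
    (hq : q = ∑ᶠ x, ν.f (Sum.inl x))
    (hμX : ∀ x, μ.f (Sum.inl x) = p * μX.f x)
    (hμY : ∀ y, μ.f (Sum.inr y) = (1 - p) * μY.f y)
    (hνX : ∀ x, ν.f (Sum.inl x) = q * νX.f x)
    (hνY : ∀ y, ν.f (Sum.inr y) = (1 - q) * νY.f y) :
    renyiInf μ ν = toENN
      (max
        (ENNReal.log (ENNReal.ofReal p / ENNReal.ofReal q)
          + (renyiInf μX νX : EReal))
        (ENNReal.log (ENNReal.ofReal (1 - p) / ENNReal.ofReal (1 - q))
          + (renyiInf μY νY : EReal))) := by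
  have hp0 : 0 ≤ p := hp ▸ finsum_nonneg fun x => μ.nonneg _
  have hq0 : 0 ≤ q := hq ▸ finsum_nonneg fun x => ν.nonneg _
  have hp1 : 0 ≤ 1 - p := by
    have := finsum_nonneg fun y => μ.nonneg (Sum.inr y)
    linarith [FinDist.finsum_inl_add_finsum_inr μ]
  have hq1 : 0 ≤ 1 - q := by
    have := finsum_nonneg fun y => ν.nonneg (Sum.inr y)
    linarith [FinDist.finsum_inl_add_finsum_inr ν]
  rw [FinDist.renyiInf_eq_toENN_log_maxRatio, FinDist.coe_renyiInf, FinDist.coe_renyiInf,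
    FinDist.maxRatio_sum hp0 hq0 hp1 hq1 hμX hμY hνX hνY,
    log_monotone.map_max, log_mul_add, log_mul_add]

theorem renyiInf_chain_rule_sum {X Y : Type*} [Nonempty X] [Nonempty Y]
    (μ ν : FinDist (X ⊕ Y)) (μX νX : FinDist X) (μY νY : FinDist Y) (p q : ℝ)
    (hp : p = ∑ᶠ x, μ.f (Sum.inl x))
    (hq : q = ∑ᶠ x, ν.f (Sum.inl x))
    (hμX : ∀ x, μ.f (Sum.inl x) = p * μX.f x)
    (hμY : ∀ y, μ.f (Sum.inr y) = (1 - p) * μY.f y)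
    (hνX : ∀ x, ν.f (Sum.inl x) = q * νX.f x)
    (hνY : ∀ y, ν.f (Sum.inr y) = (1 - q) * νY.f y) :
    renyiInf μ ν = toENN
      (max
        (ENNReal.log (ENNReal.ofReal p / ENNReal.ofReal q)
          + (renyiInf μX νX : EReal))
        (ENNReal.log (ENNReal.ofReal (1 - p) / ENNReal.ofReal (1 - q))
          + (renyiInf μY νY : EReal))) :=
  renyiInf_chain_rule_sum_general μ ν μX νX μY νY p q hp hq hμX hμY hνX hνY
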